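/- arXiv:2411.01128 — 8 statements merged into one kernel-verified Lean document; each statement's English description precedes it below -/
import Mathlib

section
/- Let N ≥ 1 be an integer and let m ≥ 2 be an even integer. Then Tr(Σ_{i₁,…,i_m=1}^N X_{i₁ i₂} X_{i₂ i₃} ⋯ X_{i_{m−1} i_m} X_{i_m i₁}) = (N−1)^m − 1 + N². Equivalently, the value of the so(N) weight system in the standard representation on the standard cycle (1,2,…,m) equals ((N−1)^m − 1 + N²)/N. -/
/-!
Summing the products of the blocks `X_{ij}` over closed index walks gives the trace of the
`m`-th power of the block matrix `(X_{ij})`, so the trace sum is `tr T^m` for the transfer matrix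
`T_{(i,a),(j,b)} = (X_{ij})_{ab}` on pairs of indices. Writing `δ` for the vectorised identity, `δ_{(i,a)} = [i = a]`,
one has `T = |δ⟩⟨δ| - Q`, where `Q` is the permutation matrix of the involution
`(i,a) ↦ (N+1-a, N+1-i)`, which fixes `δ`. Since `⟨δ,δ⟩ = N`, this gives
`T² = 1 + (N-2)|δ⟩⟨δ| = (1 - E) + (N-1)² E` with `E = |δ⟩⟨δ|/N` an idempotent of trace `1`,
so `tr T^{2k} = (N² - 1) + (N-1)^{2k}`.
-/

open Matrix

/-- The standard generators `X_{ij} = E_{ij} - E_{N+1-j, N+1-i}` of `so(N)`,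
as `N × N` matrices over `ℚ` (indices zero-based, so `N+1-i` becomes `Fin.rev i`). -/
noncomputable def soGen (N : ℕ) (i j : Fin N) : Matrix (Fin N) (Fin N) ℚ :=
  Matrix.single i j 1 - Matrix.single j.rev i.rev 1

/-- `W_N(α) = Tr (Σ_{i₁,…,i_m} X_{i₁ i_{α(1)}} ⋯ X_{i_m i_{α(m)}})`,
the (un-normalized) standard-representation so(N) weight of a permutation
`α` of `{1,…,m}`; the product is taken in order of increasing position. -/
noncomputable def soWeight (N m : ℕ) (α : Equiv.Perm (Fin m)) : ℚ :=
  Matrix.trace (∑ i : Fin m → Fin N,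
    ((List.finRange m).map fun k => soGen N (i k) (i (α k))).prod)

theorem Fin.sum_univ_pi_eq_sum_cons {ι M : Type*} [Fintype ι] [AddCommMonoid M] {n : ℕ}
    (f : (Fin (n + 1) → ι) → M) : ∑ p, f p = ∑ a, ∑ p : Fin n → ι, f (Fin.cons a p) := by
  rw [← (Fin.consEquiv fun _ => ι).sum_comp, Fintype.sum_prod_type]
  rfl

namespace Matrix

theorem trace_comp {ι κ R : Type*} [Fintype ι] [Fintype κ] [AddCommMonoid R]
    (M : Matrix ι ι (Matrix κ κ R)) : trace (comp ι ι κ κ R M) = trace (trace M) := by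
  simp only [trace, diag, comp_apply, Fintype.sum_prod_type, Matrix.sum_apply]
  exact Finset.sum_comm

variable {ι R : Type*} [Fintype ι] [DecidableEq ι] [Semiring R]

theorem pow_succ_apply_eq_sum_paths (G : Matrix ι ι R) (n : ℕ) (i j : ι) :
    (G ^ (n + 1)) i j = ∑ p : Fin n → ι,
      (List.ofFn fun k => G ((Fin.cons i p : Fin (n + 1) → ι) k)
        ((Fin.snoc p j : Fin (n + 1) → ι) k)).prod := by
  induction n generalizing i with
  | zero => simp [Fin.snoc]
  | succ n ih =>
    rw [pow_succ', mul_apply, Fin.sum_univ_pi_eq_sum_cons]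
    refine Finset.sum_congr rfl fun a _ => ?_
    rw [ih, Finset.mul_sum]
    refine Finset.sum_congr rfl fun p _ => ?_
    rw [List.ofFn_succ, List.prod_cons, ← Fin.cons_snoc_eq_snoc_cons]
    simp

theorem trace_pow_succ_eq_sum_cycles (G : Matrix ι ι R) (n : ℕ) :
    trace (G ^ (n + 1)) =
      ∑ p : Fin (n + 1) → ι, (List.ofFn fun k => G (p k) (p (finRotate _ k))).prod := by
  simp only [trace, diag, pow_succ_apply_eq_sum_paths, Fin.snoc_eq_cons_rotate,
    Fin.sum_univ_pi_eq_sum_cons]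

end Matrix

theorem IsIdempotentElem.pow_one_sub_add_smul {R A : Type*} [CommSemiring R] [Ring A]
    [Algebra R A] {e : A} (he : IsIdempotentElem e) (c : R) (k : ℕ) :
    ((1 - e) + c • e) ^ k = (1 - e) + c ^ k • e := by
  induction k with
  | zero => simp
  | succ k ih =>
    rw [pow_succ, ih]
    simp only [add_mul, mul_add, he.one_sub.eq, he.eq, he.mul_one_sub_self, he.one_sub_mul_self,
      smul_zero, mul_smul_comm, smul_mul_assoc, add_zero, zero_add, smul_smul, pow_succ']

noncomputable def soTransfer (N : ℕ) : Matrix (Fin N × Fin N) (Fin N × Fin N) ℚ :=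
  comp _ _ _ _ ℚ (of (soGen N))

theorem soWeight_finRotate_succ (N n : ℕ) :
    soWeight N (n + 1) (finRotate (n + 1)) = trace (soTransfer N ^ (n + 1)) := by
  rw [soWeight, soTransfer, ← compRingEquiv_apply, ← map_pow, compRingEquiv_apply, trace_comp,
    trace_pow_succ_eq_sum_cycles]
  simp only [of_apply, List.ofFn_eq_map]

def soDiagVec (N : ℕ) : Fin N × Fin N → ℚ := fun x => if x.1 = x.2 then 1 else 0

def soRevSwap (N : ℕ) : Equiv.Perm (Fin N × Fin N) :=
  Function.Involutive.toPerm (fun x => (x.2.rev, x.1.rev)) fun x => by simp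

@[simp]
theorem soRevSwap_apply (N : ℕ) (x : Fin N × Fin N) : soRevSwap N x = (x.2.rev, x.1.rev) := rfl

theorem soRevSwap_mul_self (N : ℕ) : soRevSwap N * soRevSwap N = 1 := by
  ext x <;> simp

theorem soDiagVec_comp_soRevSwap (N : ℕ) : soDiagVec N ∘ soRevSwap N = soDiagVec N := by
  ext x
  simp [soDiagVec, eq_comm]

theorem soDiagVec_dotProduct_self (N : ℕ) : soDiagVec N ⬝ᵥ soDiagVec N = N := by
  simp [soDiagVec, dotProduct, Fintype.sum_prod_type]

theorem soTransfer_eq (N : ℕ) :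
    soTransfer N = vecMulVec (soDiagVec N) (soDiagVec N) - (soRevSwap N).permMatrix ℚ := by
  ext ⟨i, a⟩ ⟨j, b⟩
  simp only [soTransfer, soGen, comp_apply, of_apply, Matrix.sub_apply, single_apply,
    vecMulVec_apply, soDiagVec, PEquiv.toMatrix_apply, Equiv.toPEquiv_apply, Option.mem_some_iff,
    soRevSwap_apply, Prod.mk.injEq, Fin.rev_eq_iff, ite_zero_mul_ite_zero, mul_one]
  grind [Fin.rev_rev]

theorem soTransfer_sq (N : ℕ) :
    soTransfer N ^ 2 = 1 + ((N : ℚ) - 2) • vecMulVec (soDiagVec N) (soDiagVec N) := by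
  have hsymm : (soRevSwap N).symm = soRevSwap N := by
    rw [← Equiv.Perm.inv_def, inv_eq_of_mul_eq_one_right (soRevSwap_mul_self N)]
  rw [soTransfer_eq, sq, sub_mul, mul_sub, mul_sub, vecMulVec_mul_vecMulVec, mul_vecMulVec,
    vecMulVec_mul, permMatrix_mulVec, vecMul_permMatrix, hsymm, soDiagVec_comp_soRevSwap,
    ← permMatrix_mul, soRevSwap_mul_self, permMatrix_one, soDiagVec_dotProduct_self,
    vecMulVec_smul]
  module

noncomputable def soProj (N : ℕ) : Matrix (Fin N × Fin N) (Fin N × Fin N) ℚ :=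
  (N : ℚ)⁻¹ • vecMulVec (soDiagVec N) (soDiagVec N)

theorem isIdempotentElem_soProj (N : ℕ) : IsIdempotentElem (soProj N) := by
  rw [IsIdempotentElem, soProj, smul_mul_smul, vecMulVec_mul_vecMulVec,
    soDiagVec_dotProduct_self, vecMulVec_smul, smul_smul]
  field_simp

theorem trace_soProj {N : ℕ} (hN : N ≠ 0) : trace (soProj N) = 1 := by
  rw [soProj, trace_smul, trace_vecMulVec, soDiagVec_dotProduct_self, smul_eq_mul]
  field_simp

theorem soTransfer_sq_eq {N : ℕ} (hN : N ≠ 0) :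
    soTransfer N ^ 2 = (1 - soProj N) + ((N : ℚ) - 1) ^ 2 • soProj N := by
  have hP : vecMulVec (soDiagVec N) (soDiagVec N) = (N : ℚ) • soProj N := by
    rw [soProj, smul_smul, mul_inv_cancel₀ (by exact_mod_cast hN), one_smul]
  rw [soTransfer_sq, hP]
  module

/-- The value of the trace sum on the standard cycle `(1,2,…,m)` for even `m ≥ 2`
is `(N-1)^m - 1 + N²` (i.e. the so(N) weight system in the standard representation
takes the value `((N-1)^m - 1 + N²)/N` on the standard cycle). -/
theorem soWeight_standardCycle_even (N m : ℕ) (hN : 1 ≤ N) (hm : 2 ≤ m)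
    (hme : Even m) :
    soWeight N m (finRotate m) = ((N : ℚ) - 1) ^ m - 1 + (N : ℚ) ^ 2 := by
  obtain ⟨k, rfl⟩ := hme
  have hN₀ : N ≠ 0 := by omega
  obtain ⟨n, hn⟩ : ∃ n, k + k = n + 1 := ⟨k + k - 1, by omega⟩
  rw [hn, soWeight_finRotate_succ, ← hn, ← two_mul, pow_mul, soTransfer_sq_eq hN₀,
    (isIdempotentElem_soProj N).pow_one_sub_add_smul, trace_add, trace_sub, trace_one,
    trace_smul, trace_soProj hN₀, ← pow_mul]
  simp only [Fintype.card_prod, Fintype.card_fin, Nat.cast_mul, smul_eq_mul, mul_one]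
  ring
end

section
/- Let N ≥ 1 be an integer and let m ≥ 1 be an odd integer. Then Tr(Σ_{i₁,…,i_m=1}^N X_{i₁ i₂} X_{i₂ i₃} ⋯ X_{i_{m−1} i_m} X_{i_m i₁}) = (N−1)^m + 1 − N. Equivalently, the value of the so(N) weight system in the standard representation on the standard cycle (1,2,…,m) equals ((N−1)^m + 1 − N)/N. -/
open Matrix

/-!
Arrange the generators into the block matrix `X = (X_{ab})_{a,b}`; the trace sum over closed
index cycles is then the trace of `X ^ m`, read as a matrix on pairs of indices. On pairs,
`X = P - Q` where `P = d dᵀ` for the indicator `d` of the diagonal and `Q` is the permutation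
matrix of the involution `(a, p) ↦ (p̄, ā)` with `ā = N + 1 - a`. Since `Q` fixes `d`,
`PQ = QP = P` and `P² = N P`, so `(P - Q) ^ m = (-Q) ^ m + a_m P` with
`N a_m = (N - 1) ^ m - (-1) ^ m`. For odd `m` and `Q² = 1` this gives
`tr X ^ m = -tr Q + (N - 1) ^ m + 1 = (N - 1) ^ m + 1 - N`.
-/

open Finset

section Walks

variable {ι A : Type*} [Fintype ι] [DecidableEq ι] [Semiring A]

theorem Matrix.pow_succ_apply_eq_sum_walks (X : Matrix ι ι A) (n : ℕ) (a b : ι) :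
    (X ^ (n + 1)) a b = ∑ v : Fin n → ι,
      (List.ofFn fun k =>
        X ((Fin.cons a v : Fin (n + 1) → ι) k) ((Fin.snoc v b : Fin (n + 1) → ι) k)).prod := by
  induction n generalizing a with
  | zero => simp [Fin.snoc]
  | succ n ih =>
    rw [pow_succ', mul_apply, ← (Fin.consEquiv fun _ => ι).sum_comp, Fintype.sum_prod_type]
    refine sum_congr rfl fun c _ => ?_
    rw [ih, mul_sum]
    refine sum_congr rfl fun w _ => ?_
    simp [List.ofFn_succ, Fin.consEquiv, ← Fin.cons_snoc_eq_snoc_cons]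

theorem Matrix.trace_pow_succ_eq_sum_cycles_s1 (X : Matrix ι ι A) (n : ℕ) :
    trace (X ^ (n + 1)) =
      ∑ i : Fin (n + 1) → ι, (List.ofFn fun k => X (i k) (i (finRotate (n + 1) k))).prod := by
  rw [trace, ← (Fin.consEquiv fun _ => ι).sum_comp, Fintype.sum_prod_type]
  refine sum_congr rfl fun a _ => ?_
  rw [diag_apply, pow_succ_apply_eq_sum_walks]
  refine sum_congr rfl fun v _ => ?_
  simp only [Fin.consEquiv, Equiv.coe_fn_mk, Fin.snoc_eq_cons_rotate]

end Walks

theorem Matrix.trace_comp_s1 {I K R : Type*} [Fintype I] [Fintype K] [AddCommMonoid R]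
    (M : Matrix I I (Matrix K K R)) : trace (comp I I K K R M) = trace (trace M) := by
  simp [trace, Fintype.sum_prod_type, Matrix.sum_apply, sum_comm (γ := I)]

theorem sub_pow_eq_neg_pow_add_geom_sum_smul {K R : Type*} [CommRing K] [Ring R] [Algebra K R]
    {P Q : R} {c : K} (hPP : P * P = c • P) (hQP : Q * P = P) (hPQ : P * Q = P) (n : ℕ) :
    (P - Q) ^ n = (-Q) ^ n + (∑ i ∈ range n, (-1) ^ i * (c - 1) ^ (n - 1 - i)) • P := by
  have hP (k : ℕ) : P * (-Q) ^ k = (-1 : K) ^ k • P := by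
    induction k with
    | zero => simp
    | succ k ih =>
      rw [pow_succ, ← mul_assoc, ih, smul_mul_assoc, mul_neg, hPQ, pow_succ, mul_smul,
        neg_one_smul]
  induction n with
  | zero => simp
  | succ n ih =>
    rw [pow_succ', ih, Nat.add_sub_cancel, geom_sum₂_succ_eq]
    simp only [sub_mul, mul_add, hP, mul_smul_comm, hPP, hQP, add_smul, mul_smul, sub_smul]
    rw [pow_succ' (-Q), neg_mul, smul_sub, one_smul, smul_comm c]
    abel

theorem Matrix.trace_sub_pow_of_odd {ι K : Type*} [Fintype ι] [DecidableEq ι] [CommRing K]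
    {P Q : Matrix ι ι K} (hPP : P * P = trace P • P) (hQP : Q * P = P) (hPQ : P * Q = P)
    (hQQ : Q * Q = 1) {n : ℕ} (hn : Odd n) :
    trace ((P - Q) ^ n) = (trace P - 1) ^ n + 1 - trace Q := by
  have hQn : (-Q) ^ n = -Q := by
    rw [hn.neg_pow]
    obtain ⟨k, rfl⟩ := hn
    rw [pow_succ, pow_mul, sq, hQQ, one_pow, one_mul]
  have hgeom := geom_sum₂_mul (-1 : K) (trace P - 1) n
  rw [hn.neg_one_pow] at hgeom
  rw [sub_pow_eq_neg_pow_add_geom_sum_smul hPP hQP hPQ, hQn, trace_add, trace_neg, trace_smul,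
    smul_eq_mul]
  linear_combination (-1 : K) * hgeom

section RankOneAndPermutation

variable {m n R : Type*} [Fintype n] [CommRing R]

theorem Matrix.vecMulVec_self_mul_self (u : n → R) :
    vecMulVec u u * vecMulVec u u = trace (vecMulVec u u) • vecMulVec u u := by
  rw [vecMulVec_mul_vecMulVec, vecMulVec_smul]
  rfl

theorem Matrix.permMatrix_mul_vecMulVec_of_comp_eq [DecidableEq n] {σ : Equiv.Perm n}
    {u : n → R} (hu : u ∘ σ = u) (v : m → R) :
    σ.permMatrix R * vecMulVec u v = vecMulVec u v := by
  rw [mul_vecMulVec, permMatrix_mulVec, hu]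

theorem Matrix.vecMulVec_mul_permMatrix_of_comp_eq [DecidableEq n] {σ : Equiv.Perm n}
    (u : m → R) {v : n → R} (hv : v ∘ σ = v) :
    vecMulVec u v * σ.permMatrix R = vecMulVec u v := by
  rw [vecMulVec_mul, vecMul_permMatrix, (Equiv.comp_symm_eq _ _ _).2 hv.symm]

end RankOneAndPermutation

section StandardRepresentation

variable (N : ℕ)

def finDiagIndicator : Fin N × Fin N → ℚ := fun x => if x.1 = x.2 then 1 else 0

def finRevSwap : Equiv.Perm (Fin N × Fin N) :=
  (Equiv.prodComm _ _).trans (Fin.revPerm.prodCongr Fin.revPerm)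

theorem finRevSwap_apply (x : Fin N × Fin N) : finRevSwap N x = (x.2.rev, x.1.rev) := rfl

theorem permMatrix_finRevSwap_mul_self :
    (finRevSwap N).permMatrix ℚ * (finRevSwap N).permMatrix ℚ = 1 := by
  have hσ : finRevSwap N * finRevSwap N = 1 := by
    ext x <;> simp [Equiv.Perm.mul_apply, finRevSwap_apply]
  rw [← permMatrix_mul, hσ, permMatrix_one]

theorem finDiagIndicator_comp_finRevSwap :
    finDiagIndicator N ∘ finRevSwap N = finDiagIndicator N := by
  ext x
  simp [finDiagIndicator, finRevSwap_apply, eq_comm]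

theorem comp_of_soGen : comp _ _ _ _ ℚ (of (soGen N)) =
    vecMulVec (finDiagIndicator N) (finDiagIndicator N) - (finRevSwap N).permMatrix ℚ := by
  ext ⟨a, p⟩ ⟨b, q⟩
  have hrev : b.rev = p ↔ p.rev = b := by rw [Fin.rev_eq_iff, eq_comm]
  simp [soGen, finDiagIndicator, finRevSwap_apply, vecMulVec_apply, single_apply,
    PEquiv.toMatrix_apply, hrev, ← ite_and, and_comm]

theorem trace_vecMulVec_finDiagIndicator :
    trace (vecMulVec (finDiagIndicator N) (finDiagIndicator N)) = N := by
  simp [trace, finDiagIndicator, vecMulVec_apply, Fintype.sum_prod_type]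

theorem trace_permMatrix_finRevSwap : trace ((finRevSwap N).permMatrix ℚ) = N := by
  simp [trace, finRevSwap_apply, PEquiv.toMatrix_apply, Fintype.sum_prod_type, Prod.ext_iff,
    Fin.rev_eq_iff, ite_and]

theorem soWeight_finRotate_eq_trace_pow (n : ℕ) :
    soWeight N (n + 1) (finRotate (n + 1)) =
      trace ((vecMulVec (finDiagIndicator N) (finDiagIndicator N) -
        (finRevSwap N).permMatrix ℚ) ^ (n + 1)) := by
  rw [← comp_of_soGen, ← compRingEquiv_apply, ← map_pow, compRingEquiv_apply, trace_comp_s1,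
    trace_pow_succ_eq_sum_cycles_s1, soWeight, trace_sum, trace_sum]
  simp only [List.ofFn_eq_map, of_apply]

end StandardRepresentation

theorem soWeight_standardCycle_odd_general (N m : ℕ) (hmo : Odd m) :
    soWeight N m (finRotate m) = ((N : ℚ) - 1) ^ m + 1 - (N : ℚ) := by
  obtain ⟨n, rfl⟩ := Nat.exists_eq_add_one.2 hmo.pos
  have hd := finDiagIndicator_comp_finRevSwap N
  rw [soWeight_finRotate_eq_trace_pow,
    trace_sub_pow_of_odd (vecMulVec_self_mul_self _) (permMatrix_mul_vecMulVec_of_comp_eq hd _)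
      (vecMulVec_mul_permMatrix_of_comp_eq _ hd) (permMatrix_finRevSwap_mul_self N) hmo,
    trace_vecMulVec_finDiagIndicator, trace_permMatrix_finRevSwap]

/-- The value of the trace sum on the standard cycle `(1,2,…,m)` for odd `m ≥ 1`
is `(N-1)^m + 1 - N` (i.e. the so(N) weight system in the standard representation
takes the value `((N-1)^m + 1 - N)/N` on the standard cycle). -/
theorem soWeight_standardCycle_odd (N m : ℕ) (hN : 1 ≤ N) (hm : 1 ≤ m)
    (hmo : Odd m) :
    soWeight N m (finRotate m) = ((N : ℚ) - 1) ^ m + 1 - (N : ℚ) :=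
  soWeight_standardCycle_odd_general N m hmo
end

section
/- The standard-representation so(N) weight of a permutation is invariant under cyclic shift: for every integer N ≥ 1, every m ≥ 1, and every permutation α of {1,…,m}, W_N(σ⁻¹ ∘ α ∘ σ) = W_N(α), where σ is the long cycle σ(k) = k+1 for k < m and σ(m) = 1. -/
open Matrix

/-!
Substituting `i ↦ i ∘ σ` in the sum over index functions turns each summand of
`W_N(σ⁻¹ α σ)` into the trace of the corresponding summand of `W_N(α)` with its factors
rotated by one position, and the trace of a product is invariant under cyclic rotation.
-/

theorem List.map_finRotate_finRange (m : ℕ) :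
    (List.finRange m).map (finRotate m) = (List.finRange m).rotate 1 := by
  refine List.ext_getElem (by simp) fun k _ _ => ?_
  ext
  simp [List.getElem_rotate, finRotate_apply, Fin.val_add]

theorem Matrix.trace_list_prod_rotate {n R : Type*} [Fintype n] [DecidableEq n]
    [CommSemiring R] (l : List (Matrix n n R)) (k : ℕ) :
    trace (l.rotate k).prod = trace l.prod := by
  rw [List.rotate_eq_drop_append_take_mod, List.prod_append, trace_mul_comm, ← List.prod_append,
    List.take_append_drop]

theorem Matrix.trace_prod_finRange_map_comp_finRotate {n R : Type*} [Fintype n] [DecidableEq n]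
    [CommSemiring R] {m : ℕ} (f : Fin m → Matrix n n R) :
    trace ((List.finRange m).map (f ∘ finRotate m)).prod = trace ((List.finRange m).map f).prod := by
  rw [← List.map_map, List.map_finRotate_finRange, List.map_rotate, trace_list_prod_rotate]

theorem soWeight_cyclicShift_general (N m : ℕ)
    (α : Equiv.Perm (Fin m)) :
    soWeight N m ((finRotate m)⁻¹ * α * finRotate m) = soWeight N m α := by
  simp only [soWeight, trace_sum]
  refine (Fintype.sum_equiv (Equiv.arrowCongr (finRotate m).symm (Equiv.refl (Fin N))) _ _
    fun i => ?_).symm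
  rw [← trace_prod_finRange_map_comp_finRotate]
  simp only [Function.comp_def, Equiv.arrowCongr_apply, Equiv.symm_symm, Equiv.coe_refl, id,
    Equiv.Perm.mul_apply, Equiv.Perm.inv_def, Equiv.apply_symm_apply]

/-- The standard-representation so(N) weight is invariant under cyclic shift:
`W_N(σ⁻¹ ∘ α ∘ σ) = W_N(α)` where `σ` is the long cycle `k ↦ k+1 (mod m)`. -/
theorem soWeight_cyclicShift (N m : ℕ) (hN : 1 ≤ N) (hm : 1 ≤ m)
    (α : Equiv.Perm (Fin m)) :
    soWeight N m ((finRotate m)⁻¹ * α * finRotate m) = soWeight N m α :=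
  soWeight_cyclicShift_general N m α
end

section
/- Inverting one disjoint cycle of a permutation multiplies its standard-representation so(N) weight by (−1) raised to the length of that cycle: let N ≥ 1, m ≥ 1, and let β, γ be permutations of {1,…,m} with disjoint supports such that β is a cycle whose support has cardinality ℓ. Then W_N(β⁻¹ ∘ γ) = (−1)^ℓ · W_N(β ∘ γ). -/
open Matrix

/-!
For `k` in the support of `β` (which `γ` fixes) the factor `X_{i_k, i_{β⁻¹ k}}` of a summand
of `W_N(β⁻¹γ)` equals `-X_{j_k, j_{β k}}` for the multi-index `j_k = rev (i_{β⁻¹ k})`,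
because `X_{rev b, rev a} = -X_{a b}`; off the support of `β` both permutations act as `γ`
and `j = i`. As `i ↦ j` is a bijection of multi-indices, the weights differ by `(-1)^|supp β|`.
-/

theorem List.prod_map_smul {ι R M : Type*} [CommMonoid R] [Monoid M] [MulAction R M]
    [IsScalarTower R M M] [SMulCommClass R M M] (ε : ι → R) (g : ι → M) (l : List ι) :
    (l.map fun k => ε k • g k).prod = (l.map ε).prod • (l.map g).prod := by
  induction l with
  | nil => simp
  | cons k l ih => simp only [List.map_cons, List.prod_cons, ih, smul_mul_smul_comm]

theorem soGen_rev_rev (N : ℕ) (a b : Fin N) : soGen N b.rev a.rev = -soGen N a b := by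
  simp only [soGen, Fin.rev_rev, neg_sub]

noncomputable def soTerm (N : ℕ) {m : ℕ} (α : Equiv.Perm (Fin m)) (i : Fin m → Fin N) :
    Matrix (Fin N) (Fin N) ℚ :=
  ((List.finRange m).map fun k => soGen N (i k) (i (α k))).prod

theorem soWeight_eq_trace_sum_soTerm (N m : ℕ) (α : Equiv.Perm (Fin m)) :
    soWeight N m α = Matrix.trace (∑ i, soTerm N α i) :=
  rfl

section ReflectAlong

variable {ι : Type*} [DecidableEq ι] [Fintype ι] {N : ℕ}

def reflectAlong (β : Equiv.Perm ι) : Equiv.Perm (ι → Fin N) :=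
  (Equiv.arrowCongr β (Equiv.refl _)).trans
    (Equiv.piCongrRight fun k => if k ∈ β.support then Fin.revPerm else 1)

theorem reflectAlong_apply (β : Equiv.Perm ι) (i : ι → Fin N) (k : ι) :
    reflectAlong β i k = if k ∈ β.support then (i (β⁻¹ k)).rev else i k := by
  have hinv : (β⁻¹ k = k) ↔ k ∉ β.support := by
    rw [← Equiv.Perm.support_inv, Equiv.Perm.notMem_support]
  change (if k ∈ β.support then Fin.revPerm else (1 : Equiv.Perm (Fin N))) (i (β⁻¹ k)) = _
  split_ifs with hk
  · rfl
  · rw [hinv.mpr hk]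
    rfl

theorem soGen_inv_mul_apply_eq_smul {β γ : Equiv.Perm ι} (hdisj : β.Disjoint γ)
    (i : ι → Fin N) (k : ι) :
    soGen N (i k) (i ((β⁻¹ * γ) k)) = (if k ∈ β.support then -1 else 1 : ℚ) •
      soGen N (reflectAlong β i k) (reflectAlong β i ((β * γ) k)) := by
  simp only [Equiv.Perm.mul_apply, reflectAlong_apply]
  by_cases hk : k ∈ β.support
  · have hγk : γ k = k := Equiv.Perm.notMem_support.mp (hdisj.mem_imp hk)
    have hβk : β k ∈ β.support := Equiv.Perm.apply_mem_support.mpr hk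
    rw [hγk, if_pos hk, if_pos hk, if_pos hβk, Equiv.Perm.coe_inv, Equiv.symm_apply_apply,
      soGen_rev_rev, neg_one_smul, neg_neg]
  · have hβγk : β (γ k) = γ k := by
      rw [← Equiv.Perm.mul_apply, hdisj.commute.eq, Equiv.Perm.mul_apply,
        Equiv.Perm.notMem_support.mp hk]
    have hγk : γ k ∉ β.support := Equiv.Perm.notMem_support.mpr hβγk
    have hβinvγk : β⁻¹ (γ k) = γ k := Equiv.Perm.inv_eq_iff_eq.mpr hβγk.symm
    rw [hβγk, hβinvγk, if_neg hk, if_neg hk, if_neg hγk, one_smul]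

end ReflectAlong

theorem soTerm_inv_mul_of_disjoint {N m : ℕ} {β γ : Equiv.Perm (Fin m)} (hdisj : β.Disjoint γ)
    (i : Fin m → Fin N) :
    soTerm N (β⁻¹ * γ) i =
      (-1 : ℚ) ^ β.support.card • soTerm N (β * γ) (reflectAlong β i) := by
  have hsign : ((List.finRange m).map fun k => if k ∈ β.support then (-1 : ℚ) else 1).prod =
      (-1) ^ β.support.card := by
    rw [← Fin.prod_univ_def, Finset.prod_ite_mem, Finset.univ_inter, Finset.prod_const]
  rw [soTerm, List.map_congr_left fun k _ => soGen_inv_mul_apply_eq_smul hdisj i k,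
    List.prod_map_smul, hsign, soTerm]

theorem soWeight_inv_mul_of_disjoint (N : ℕ) {m : ℕ} {β γ : Equiv.Perm (Fin m)}
    (hdisj : β.Disjoint γ) :
    soWeight N m (β⁻¹ * γ) = (-1 : ℚ) ^ β.support.card * soWeight N m (β * γ) := by
  simp only [soWeight_eq_trace_sum_soTerm, soTerm_inv_mul_of_disjoint hdisj, ← Finset.smul_sum,
    Equiv.sum_comp (reflectAlong β) (soTerm N (β * γ)), trace_smul, smul_eq_mul]

theorem soWeight_invert_cycle_general (N m ℓ : ℕ)
    (β γ : Equiv.Perm (Fin m)) (hdisj : β.Disjoint γ)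
    (hlen : β.support.card = ℓ) :
    soWeight N m (β⁻¹ * γ) = (-1 : ℚ) ^ ℓ * soWeight N m (β * γ) :=
  hlen ▸ soWeight_inv_mul_of_disjoint N hdisj

/-- Inverting one disjoint cycle of a permutation multiplies the
standard-representation so(N) weight by `(-1)^ℓ`, where `ℓ` is the length
of that cycle: if `β` and `γ` have disjoint supports and `β` is a cycle
whose support has cardinality `ℓ`, then `W_N(β⁻¹ ∘ γ) = (-1)^ℓ ⬝ W_N(β ∘ γ)`. -/
theorem soWeight_invert_cycle (N m ℓ : ℕ) (hN : 1 ≤ N) (hm : 1 ≤ m)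
    (β γ : Equiv.Perm (Fin m)) (hdisj : β.Disjoint γ)
    (hcyc : β.IsCycle) (hlen : β.support.card = ℓ) :
    soWeight N m (β⁻¹ * γ) = (-1 : ℚ) ^ ℓ * soWeight N m (β * γ) :=
  soWeight_invert_cycle_general N m ℓ β γ hdisj hlen
end

section
/- For every integer N ≥ 1, every m ≥ 1, and every permutation α of {1,…,m}, the standard-representation so(N) weight of the inverse permutation satisfies W_N(α⁻¹) = (−1)^m · W_N(α). -/
open Matrix

/-!
The generators satisfy `X_{j̄ ī} = -X_{ij}`, where `ī = N+1-i`. Rewriting every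
factor of the word `X_{i₁ i_{α⁻¹(1)}} ⋯ X_{i_m i_{α⁻¹(m)}}` this way produces a sign `(-1)^m`
and the word of `α` at the relabelled indices `i' = ī ∘ α⁻¹`, since `i'_k = ī_{α⁻¹(k)}` and
`i'_{α(k)} = ī_k`. The relabelling is a bijection of the index tuples, so it does not change the sum.
-/

lemma soGen_rev_rev_s4 (N : ℕ) (i j : Fin N) : soGen N j.rev i.rev = -soGen N i j := by
  simp [soGen, neg_sub]

lemma neg_one_pow_mul_eq_smul {R A : Type*} [CommRing R] [Ring A] [Algebra R A]
    (n : ℕ) (a : A) :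
    (-1 : A) ^ n * a = (-1 : R) ^ n • a := by
  rw [Algebra.smul_def, map_pow, map_neg, map_one]

noncomputable def soWord (N : ℕ) {m : ℕ} (α : Equiv.Perm (Fin m)) (i : Fin m → Fin N) :
    Matrix (Fin N) (Fin N) ℚ :=
  ((List.finRange m).map fun k => soGen N (i k) (i (α k))).prod

lemma soWeight_eq_trace_sum_soWord (N m : ℕ) (α : Equiv.Perm (Fin m)) :
    soWeight N m α = (∑ i, soWord N α i).trace :=
  rfl

def revRelabel (N : ℕ) {m : ℕ} (α : Equiv.Perm (Fin m)) : (Fin m → Fin N) ≃ (Fin m → Fin N) :=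
  Equiv.arrowCongr α Fin.revPerm

lemma soWord_inv (N : ℕ) {m : ℕ} (α : Equiv.Perm (Fin m)) (i : Fin m → Fin N) :
    soWord N α⁻¹ i = (-1 : ℚ) ^ m • soWord N α (revRelabel N α i) := by
  have hfactor : (fun k => soGen N (i k) (i (α⁻¹ k))) =
      Neg.neg ∘ fun k => soGen N (revRelabel N α i k) (revRelabel N α i (α k)) := by
    ext1 k
    simp [revRelabel, Equiv.arrowCongr, Equiv.Perm.inv_def, soGen_rev_rev_s4]
  rw [soWord, soWord, hfactor, ← List.map_map, List.prod_map_neg, List.length_map,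
    List.length_finRange, neg_one_pow_mul_eq_smul (R := ℚ)]

theorem soWeight_inv_general (N m : ℕ)
    (α : Equiv.Perm (Fin m)) :
    soWeight N m α⁻¹ = (-1 : ℚ) ^ m * soWeight N m α := by
  simp_rw [soWeight_eq_trace_sum_soWord, soWord_inv, ← Finset.smul_sum, trace_smul,
    smul_eq_mul, Equiv.sum_comp (revRelabel N α) (soWord N α)]

/-- `W_N(α⁻¹) = (-1)^m ⬝ W_N(α)` for any permutation `α` of `{1,…,m}`. -/
theorem soWeight_inv (N m : ℕ) (hN : 1 ≤ N) (hm : 1 ≤ m)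
    (α : Equiv.Perm (Fin m)) :
    soWeight N m α⁻¹ = (-1 : ℚ) ^ m * soWeight N m α :=
  soWeight_inv_general N m α
end

section
/- The standard-representation so(N) weight system is multiplicative with respect to concatenation of permutations: let N ≥ 1, let α₁ be a permutation of {1,…,m₁} and α₂ a permutation of {1,…,m₂}, and let α₁#α₂ be the permutation of {1,…,m₁+m₂} acting as α₁ on {1,…,m₁} and sending m₁+l to m₁+α₂(l) for 1 ≤ l ≤ m₂. Then (1/N)·W_N(α₁#α₂) = ((1/N)·W_N(α₁)) · ((1/N)·W_N(α₂)), i.e., N·W_N(α₁#α₂) = W_N(α₁)·W_N(α₂). -/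
open Matrix

/-- The concatenation `α₁ # α₂` of permutations `α₁` of `{1,…,m₁}` and `α₂` of
`{1,…,m₂}`: the permutation of `{1,…,m₁+m₂}` acting as `α₁` on the first block
and sending `m₁ + l` to `m₁ + α₂(l)`. -/
def permConcat {m₁ m₂ : ℕ} (α₁ : Equiv.Perm (Fin m₁)) (α₂ : Equiv.Perm (Fin m₂)) :
    Equiv.Perm (Fin (m₁ + m₂)) :=
  finSumFinEquiv.permCongr (Equiv.sumCongr α₁ α₂)

/-!
The matrix `S(α) = Σ_i X_{i₁ i_{α(1)}} ⋯ X_{i_m i_{α(m)}}`, whose trace is `W_N(α)`, satisfies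
`S(α₁ # α₂) = S(α₁) S(α₂)` because the index sum splits over the two blocks. Moreover `S(α)`
commutes with every `g` in the orthogonal group of the form `B(x, y) = Σ xᵢ y_{rev i}`:
conjugation by `g` acts on `X_{ij}` through `g` in the first index and `g⁻¹` in the second, and
summing over each index, which occurs once in a first and once in a second slot, cancels
`g g⁻¹ = 1`. Two elements of this group force `S(α)` to be scalar: the diagonal matrix with
the pairwise distinct entries `2^(i - rev i)` makes it diagonal, and the reflection in the
anisotropic all-ones vector, whose off-diagonal entries are nonzero, equalises its diagonal.
So `S(α₁) = (W_N(α₁) / N) • 1`, and taking traces gives the theorem.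
-/

theorem List.prod_ofFn_sum {A β : Type*} [Semiring A] [Fintype β] {m : ℕ} (f : Fin m → β → A) :
    (List.ofFn fun k => ∑ b, f k b).prod =
      ∑ c : Fin m → β, (List.ofFn fun k => f k (c k)).prod := by
  induction m with
  | zero => simp
  | succ m ih =>
    simp only [List.ofFn_succ, List.prod_cons, ih, Finset.sum_mul_sum]
    rw [← (Fin.consEquiv fun _ => β).sum_comp, ← Fintype.sum_prod_type']
    simp [Fin.consEquiv]

theorem List.prod_ofFn_smul {R A : Type*} [CommSemiring R] [Semiring A] [Algebra R A] {m : ℕ}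
    (a : Fin m → R) (M : Fin m → A) :
    (List.ofFn fun k => a k • M k).prod = (∏ k, a k) • (List.ofFn M).prod := by
  induction m with
  | zero => simp
  | succ m ih =>
    simp only [List.ofFn_succ, List.prod_cons, ih, Fin.prod_univ_succ, smul_mul_smul_comm]

section Contraction

variable {R n : Type*} [CommSemiring R] [Fintype n] {m : ℕ}

theorem sum_prod_mul_apply_perm (α : Equiv.Perm (Fin m)) (g h : Matrix n n R) (p q : Fin m → n) :
    ∑ i : Fin m → n, ∏ k, g (p k) (i k) * h (i (α k)) (q k) =
      ∏ k, (g * h) (p k) (q (α.symm k)) := by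
  have reindex (i : Fin m → n) : ∏ k, h (i (α k)) (q k) = ∏ k, h (i k) (q (α.symm k)) := by
    simpa using Equiv.prod_comp α fun k => h (i k) (q (α.symm k))
  simp only [Finset.prod_mul_distrib, reindex]
  simp only [← Finset.prod_mul_distrib, mul_apply]
  exact (Fintype.prod_sum fun k t => g (p k) t * h t (q (α.symm k))).symm

variable [DecidableEq n]

theorem sum_prod_one_apply_smul {M : Type*} [AddCommMonoid M] [Module R M] (α : Equiv.Perm (Fin m))
    (p : Fin m → n) (F : (Fin m → n) → M) :
    ∑ q : Fin m → n, (∏ k, (1 : Matrix n n R) (p k) (q (α.symm k))) • F q = F (p ∘ α) := by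
  simp only [one_apply, Finset.prod_boole, ite_smul, one_smul, zero_smul]
  rw [Fintype.sum_eq_single (p ∘ α)]
  · simp
  · intro q hq
    obtain ⟨k, hk⟩ := Function.ne_iff.mp hq
    exact if_neg fun h => hk (by simpa using (h (α k) (Finset.mem_univ _)).symm)

variable {A : Type*} [Semiring A] [Algebra R A]

theorem sum_prod_ofFn_transform (α : Equiv.Perm (Fin m)) (F : n → n → A) {g h : Matrix n n R}
    (hgh : g * h = 1) :
    ∑ i : Fin m → n, (List.ofFn fun k => ∑ p, ∑ q, (g p (i k) * h (i (α k)) q) • F p q).prod =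
      ∑ i : Fin m → n, (List.ofFn fun k => F (i k) (i (α k))).prod := by
  have expand (i : Fin m → n) :
      (List.ofFn fun k => ∑ p, ∑ q, (g p (i k) * h (i (α k)) q) • F p q).prod =
        ∑ c : Fin m → n × n,
          (∏ k, g (c k).1 (i k) * h (i (α k)) (c k).2) •
            (List.ofFn fun k => F (c k).1 (c k).2).prod := by
    simp only [← Fintype.sum_prod_type', List.prod_ofFn_sum, List.prod_ofFn_smul]
  simp only [expand]
  rw [Finset.sum_comm]
  simp only [← Finset.sum_smul]
  rw [← (Equiv.arrowProdEquivProdArrow (Fin m) (fun _ => n) (fun _ => n)).symm.sum_comp,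
    Fintype.sum_prod_type]
  simp [sum_prod_mul_apply_perm, hgh, sum_prod_one_apply_smul]

end Contraction

namespace Matrix

variable {n R : Type*} [Fintype n] [DecidableEq n] [CommRing R] [NoZeroDivisors R]
  {A B : Matrix n n R}

theorem apply_eq_zero_of_commute_diagonal {t : n → R} (ht : Function.Injective t)
    (h : Commute (diagonal t) A) {i j : n} (hij : i ≠ j) : A i j = 0 := by
  have hij' := congr_fun₂ h.eq i j
  rw [diagonal_mul, mul_diagonal] at hij'
  have : (t i - t j) * A i j = 0 := by linear_combination hij'
  exact (mul_eq_zero.mp this).resolve_left (sub_ne_zero.mpr (ht.ne hij))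

theorem diagonal_apply_eq_of_commute {d : n → R} (h : Commute B (diagonal d)) {i j : n}
    (hB : B i j ≠ 0) : d i = d j := by
  have hij := congr_fun₂ h.eq i j
  rw [diagonal_mul, mul_diagonal] at hij
  have : B i j * (d i - d j) = 0 := by linear_combination -hij
  exact sub_eq_zero.mp ((mul_eq_zero.mp this).resolve_left hB)

theorem eq_smul_one_of_commute {t : n → R} (ht : Function.Injective t)
    (hA : Commute (diagonal t) A) (hB : ∀ i j, i ≠ j → B i j ≠ 0) (hBA : Commute B A) (i : n) :
    A = A i i • 1 := by
  have hdiag : A = diagonal A.diag := by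
    ext a b
    by_cases hab : a = b
    · simp [hab]
    · simp [apply_eq_zero_of_commute_diagonal ht hA hab, hab]
  have hconst (a : n) : A a a = A i i := by
    by_cases hai : i = a
    · rw [hai]
    · rw [hdiag] at hBA
      exact (diagonal_apply_eq_of_commute hBA (hB i a hai)).symm
  rw [smul_one_eq_diagonal]
  conv_lhs => rw [hdiag]
  exact congrArg diagonal (funext hconst)

end Matrix

theorem soGen_conj {N : ℕ} (g : Matrix (Fin N) (Fin N) ℚ) (i j : Fin N) :
    g * soGen N i j * gᵀ.submatrix Fin.rev Fin.rev =
      ∑ p, ∑ q, (g p i * (gᵀ.submatrix Fin.rev Fin.rev) j q) • soGen N p q := by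
  ext a b
  simp only [soGen, Matrix.sub_apply, Matrix.sum_apply, Matrix.smul_apply, smul_eq_mul, mul_sub,
    Finset.sum_sub_distrib, Matrix.mul_apply, Matrix.single_apply, transpose_apply,
    submatrix_apply, @eq_comm _ i, @eq_comm _ j, Fin.rev_eq_iff]
  simp [ite_and, sub_mul, Finset.sum_sub_distrib]
  ring

noncomputable def soWeightMatrix (N m : ℕ) (α : Equiv.Perm (Fin m)) : Matrix (Fin N) (Fin N) ℚ :=
  ∑ i : Fin m → Fin N, (List.ofFn fun k => soGen N (i k) (i (α k))).prod

theorem soWeight_eq_trace (N m : ℕ) (α : Equiv.Perm (Fin m)) :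
    soWeight N m α = (soWeightMatrix N m α).trace := by
  simp [soWeight, soWeightMatrix, List.ofFn_eq_map]

theorem commute_soWeightMatrix {N m : ℕ} (α : Equiv.Perm (Fin m)) {g : Matrix (Fin N) (Fin N) ℚ}
    (hg : g * gᵀ.submatrix Fin.rev Fin.rev = 1) : Commute g (soWeightMatrix N m α) := by
  let u : (Matrix (Fin N) (Fin N) ℚ)ˣ := ⟨g, _, hg, mul_eq_one_comm.mp hg⟩
  let conj := MulSemiringAction.toRingHom (ConjAct (Matrix (Fin N) (Fin N) ℚ)ˣ)
    (Matrix (Fin N) (Fin N) ℚ) (.toConjAct u)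
  have hconj (x) : conj x = g * x * gᵀ.submatrix Fin.rev Fin.rev := ConjAct.units_smul_def _ x
  have hinv : g * soWeightMatrix N m α * gᵀ.submatrix Fin.rev Fin.rev = soWeightMatrix N m α := by
    rw [← hconj, soWeightMatrix, map_sum]
    simp only [map_list_prod, List.map_ofFn, Function.comp_def]
    simp only [hconj, soGen_conj]
    exact sum_prod_ofFn_transform α (soGen N) hg
  exact (Units.mul_inv_eq_iff_eq_mul u).mp hinv

theorem diagonal_mul_transpose_submatrix_rev {R : Type*} [CommSemiring R] {N : ℕ} {t : Fin N → R}
    (ht : ∀ i, t i * t i.rev = 1) : diagonal t * (diagonal t)ᵀ.submatrix Fin.rev Fin.rev = 1 := by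
  change diagonal t * (diagonal t)ᵀ.submatrix Fin.revPerm Fin.revPerm = 1
  rw [diagonal_transpose, submatrix_diagonal_equiv, diagonal_mul_diagonal, ← diagonal_one]
  exact congrArg diagonal (funext ht)

noncomputable def onesReflection (N : ℕ) : Matrix (Fin N) (Fin N) ℚ :=
  1 - (2 / N : ℚ) • of fun _ _ => 1

theorem onesReflection_apply_ne {N : ℕ} (hN : N ≠ 0) {i j : Fin N} (hij : i ≠ j) :
    onesReflection N i j ≠ 0 := by
  simp [onesReflection, one_apply_ne hij, hN]

theorem onesReflection_mul_transpose_submatrix_rev {N : ℕ} (hN : N ≠ 0) :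
    onesReflection N * (onesReflection N)ᵀ.submatrix Fin.rev Fin.rev = 1 := by
  have hsymm : (onesReflection N)ᵀ.submatrix Fin.rev Fin.rev = onesReflection N := by
    ext a b
    simp [onesReflection, one_apply, Fin.rev_inj]
  rw [hsymm, onesReflection]
  set K : Matrix (Fin N) (Fin N) ℚ := of fun _ _ => 1
  have hKK : K * K = (N : ℚ) • K := by ext; simp [K, mul_apply]
  have hc : (2 / N : ℚ) * (2 / N) * N = 2 / N + 2 / N := by field_simp; ring
  simp only [sub_mul, mul_sub, one_mul, mul_one, smul_mul_smul_comm, hKK, smul_smul, hc, add_smul]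
  abel

theorem soWeightMatrix_eq_smul_one {N : ℕ} (hN : 1 ≤ N) {m : ℕ} (α : Equiv.Perm (Fin m)) :
    ∃ c : ℚ, soWeightMatrix N m α = c • 1 := by
  set t : Fin N → ℚ := fun i => 2 ^ ((i : ℤ) - i.rev)
  have ht_rev (i : Fin N) : t i * t i.rev = 1 := by
    simp only [t, Fin.rev_rev, ← zpow_add₀ (two_ne_zero' ℚ), sub_add_sub_cancel, sub_self,
      zpow_zero]
  have ht_inj : Function.Injective t := by
    refine (zpow_right_injective₀ (by norm_num) (by norm_num)).comp fun i j hij => ?_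
    have := i.rev.isLt
    simp only [Fin.val_rev] at hij
    ext
    omega
  have hN0 : N ≠ 0 := by omega
  exact ⟨_, Matrix.eq_smul_one_of_commute ht_inj
    (commute_soWeightMatrix α (diagonal_mul_transpose_submatrix_rev ht_rev))
    (fun _ _ => onesReflection_apply_ne hN0)
    (commute_soWeightMatrix α (onesReflection_mul_transpose_submatrix_rev hN0)) ⟨0, hN⟩⟩

theorem permConcat_castAdd {m₁ m₂ : ℕ} (α₁ : Equiv.Perm (Fin m₁)) (α₂ : Equiv.Perm (Fin m₂))
    (k : Fin m₁) : permConcat α₁ α₂ (Fin.castAdd m₂ k) = Fin.castAdd m₂ (α₁ k) := by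
  simp [permConcat, finSumFinEquiv_symm_apply_castAdd]

theorem permConcat_natAdd {m₁ m₂ : ℕ} (α₁ : Equiv.Perm (Fin m₁)) (α₂ : Equiv.Perm (Fin m₂))
    (k : Fin m₂) : permConcat α₁ α₂ (Fin.natAdd m₁ k) = Fin.natAdd m₁ (α₂ k) := by
  simp [permConcat, finSumFinEquiv_symm_apply_natAdd]

theorem soWeightMatrix_permConcat (N : ℕ) {m₁ m₂ : ℕ} (α₁ : Equiv.Perm (Fin m₁))
    (α₂ : Equiv.Perm (Fin m₂)) :
    soWeightMatrix N (m₁ + m₂) (permConcat α₁ α₂) =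
      soWeightMatrix N m₁ α₁ * soWeightMatrix N m₂ α₂ := by
  rw [soWeightMatrix, soWeightMatrix, soWeightMatrix, Finset.sum_mul_sum, ← Fintype.sum_prod_type',
    ← (Fin.appendEquiv m₁ m₂).sum_comp]
  refine Fintype.sum_congr _ _ fun i => ?_
  have hcast (k : Fin m₁) : Fin.castLE (Nat.le_add_right m₁ m₂) k = Fin.castAdd m₂ k := rfl
  rw [List.ofFn_add, List.prod_append]
  simp [Fin.appendEquiv, hcast, permConcat_castAdd, permConcat_natAdd]

/-- Multiplicativity of the standard-representation so(N) weight under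
concatenation: `N ⬝ W_N(α₁ # α₂) = W_N(α₁) ⬝ W_N(α₂)`, i.e. the normalized
weight `W_N/N` is multiplicative. -/
theorem soWeight_concat (N : ℕ) (hN : 1 ≤ N) {m₁ m₂ : ℕ}
    (α₁ : Equiv.Perm (Fin m₁)) (α₂ : Equiv.Perm (Fin m₂)) :
    (N : ℚ) * soWeight N (m₁ + m₂) (permConcat α₁ α₂) =
      soWeight N m₁ α₁ * soWeight N m₂ α₂ := by
  obtain ⟨c, hc⟩ := soWeightMatrix_eq_smul_one hN α₁
  simp only [soWeight_eq_trace, soWeightMatrix_permConcat, hc, smul_mul, one_mul, trace_smul,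
    trace_one, Fintype.card_fin, smul_eq_mul]
  ring
end

section
/- The reversed cycle is the unique negative cyclic permutation: if m ≥ 2 and α is a cyclic permutation of {1,…,m} (a single orbit of size m) that has exactly one ascent, i.e., #{i : 1 ≤ i ≤ m−1 and α(i) > i} = 1, then α = (1, m, m−1, …, 2), that is, α(1) = m and α(i) = i−1 for all 2 ≤ i ≤ m. -/
/-- The reversed cycle is the unique negative cyclic permutation: if `α` is a
cyclic permutation of `{1,…,m}` (a single orbit of size `m`, `m ≥ 2`) with
exactly one ascent (an index `1 ≤ i ≤ m-1` with `α(i) > i`), then `α` is the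
inverse of the standard long cycle, i.e. `α = (1, m, m-1, …, 2)`, sending `1`
to `m` and `i` to `i-1` for `2 ≤ i ≤ m` (formulated zero-based on `Fin m`,
so that ascents are indices `i` with `i+1 < m` and `α i > i`). -/
theorem negative_cyclic_is_reversed (m : ℕ) (hm : 2 ≤ m)
    (α : Equiv.Perm (Fin m)) (hcyc : α.IsCycle) (hcard : α.support.card = m)
    (hasc : (Finset.univ.filter
        fun i : Fin m => (i : ℕ) + 1 < m ∧ i < α i).card = 1) :
    α = (finRotate m)⁻¹ := by
  obtain ⟨n, rfl⟩ : ∃ n, m = n + 2 := ⟨m - 2, by omega⟩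
  have hsupp : α.support = Finset.univ := by
    apply Finset.eq_univ_of_card
    simpa using hcard
  have hfix : ∀ i : Fin (n + 2), α i ≠ i := by
    intro i
    have : i ∈ α.support := hsupp ▸ Finset.mem_univ i
    exact Equiv.Perm.mem_support.mp this
  -- 0 is an ascent
  have h0mem : (0 : Fin (n + 2)) ∈ Finset.univ.filter
      fun i : Fin (n + 2) => (i : ℕ) + 1 < n + 2 ∧ i < α i := by
    simp only [Finset.mem_filter, Finset.mem_univ, true_and]
    refine ⟨by simp, ?_⟩
    exact Fin.pos_iff_ne_zero.mpr (hfix 0)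
  have hF : (Finset.univ.filter
      fun i : Fin (n + 2) => (i : ℕ) + 1 < n + 2 ∧ i < α i) = {0} := by
    obtain ⟨a, ha⟩ := Finset.card_eq_one.mp hasc
    rw [ha] at h0mem ⊢
    rw [Finset.mem_singleton.mp h0mem]
  have hdesc : ∀ i : Fin (n + 2), i ≠ 0 → α i < i := by
    intro i hi
    rcases lt_or_ge ((i : ℕ) + 1) (n + 2) with h | h
    · have hni : i ∉ (Finset.univ.filter
          fun i : Fin (n + 2) => (i : ℕ) + 1 < n + 2 ∧ i < α i) := by
        rw [hF]; simpa using hi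
      simp only [Finset.mem_filter, Finset.mem_univ, true_and, not_and] at hni
      exact lt_of_le_of_ne (not_lt.mp (hni h)) (hfix i)
    · have hle : α i ≤ i := by
        rw [Fin.le_def]
        have := (α i).isLt
        omega
      exact lt_of_le_of_ne hle (hfix i)
  have key : ∀ k : ℕ, (hk : k < n + 2) → k ≠ 0 → ((α ⟨k, hk⟩ : Fin (n+2)) : ℕ) = k - 1 := by
    intro k
    induction k using Nat.strong_induction_on with
    | _ k ih =>
      intro hk hk0
      have hlt : ((α ⟨k, hk⟩ : Fin (n+2)) : ℕ) < k := by
        have := hdesc ⟨k, hk⟩ (by simp [Fin.ext_iff, hk0])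
        exact this
      by_contra hne
      set v := ((α ⟨k, hk⟩ : Fin (n+2)) : ℕ) with hv
      have hvk : v + 1 < k := by omega
      have h1 := ih (v + 1) hvk (by omega) (by omega)
      have heq : α ⟨v + 1, by omega⟩ = α ⟨k, hk⟩ := by
        apply Fin.ext
        rw [h1]
        omega
      have := α.injective heq
      simp only [Fin.mk.injEq] at this
      omega
  have h0v : ((α 0 : Fin (n+2)) : ℕ) = n + 1 := by
    by_contra h
    have hlt : ((α 0 : Fin (n+2)) : ℕ) < n + 1 := by
      have := (α 0).isLt; omega
    have hk := key (((α 0 : Fin (n+2)) : ℕ) + 1) (by omega) (by omega)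
    have heq : α ⟨((α 0 : Fin (n+2)) : ℕ) + 1, by omega⟩ = α 0 := by
      apply Fin.ext
      rw [hk]
      omega
    have := α.injective heq
    rw [Fin.ext_iff] at this
    simp at this
  apply Equiv.ext
  intro i
  have hsym : ((finRotate (n + 2))⁻¹ : Equiv.Perm (Fin (n+2))) i
      = (finRotate (n + 2)).symm i := rfl
  rw [hsym, Equiv.eq_symm_apply, finRotate_succ_apply]
  rcases eq_or_ne i 0 with rfl | hi
  · apply Fin.ext
    simp [Fin.add_def, h0v]
  · have hk := key i.val i.isLt (fun h => hi (Fin.ext h))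
    simp only [Fin.eta] at hk
    rw [Fin.ext_iff, Fin.add_def, Fin.val_mk, Fin.val_one, hk]
    have h1 : 1 ≤ i.val := Nat.one_le_iff_ne_zero.mpr (fun h => hi (Fin.ext h))
    have := i.isLt
    rw [Nat.sub_add_cancel h1, Nat.mod_eq_of_lt this]
end

section
/- Let A be the ℚ-linear operator on ℚ[t] defined on monomials by strong induction on the degree: A(t^n) = t^n for every even n ≥ 0, A(t) = 0, and for odd n ≥ 3, A(t^n) = A((t²/2)(t^{n−2} − (t−1)^{n−2})) (this is well-defined since (t²/2)(t^{n−2} − (t−1)^{n−2}) has degree n−1 < n); A maps ℚ[t] onto the subspace of even polynomials. Then for every n ≥ 1, writing A(t^{2n+1}) = Σ_{k=1}^{n} c_k t^{2k} with c_k ∈ ℚ, one has 2c₁ + Σ_{k=2}^{n} c_k = 1; equivalently, substituting t² ↦ 2x and t^{2k} ↦ x for all k ≥ 2 into A(t^{2n+1}) yields x. -/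
open Polynomial

/-- `Amon n = A(tⁿ)`: the value of the projection operator `A` on the monomial
`tⁿ`.  For even `n`, `A(tⁿ) = tⁿ`; `A(t) = 0`; and for odd `n ≥ 3`,
`A(tⁿ) = A((t²/2)(t^{n-2} − (t−1)^{n-2}))`, where `A` is extended linearly
(the argument has degree `n-1 < n`, so the recursion is well-founded;
`A` applied to a polynomial is the sum of its coefficients times `A` of the
corresponding monomials). -/
noncomputable def Amon : ℕ → Polynomial ℚ
  | n =>
    if Even n then Polynomial.X ^ n
    else if h3 : n < 3 then 0
    else
      ∑ k ∈ (Finset.range n).attach,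
        ((Polynomial.C (1 / 2 : ℚ) * Polynomial.X ^ 2 *
            (Polynomial.X ^ (n - 2) - (Polynomial.X - 1) ^ (n - 2))).coeff k.val) •
          Amon k.val
  decreasing_by exact Finset.mem_range.mp k.property

noncomputable def qpoly (n : ℕ) : Polynomial ℚ :=
  Polynomial.C (1 / 2 : ℚ) * Polynomial.X ^ 2 *
    (Polynomial.X ^ (n - 2) - (Polynomial.X - 1) ^ (n - 2))

lemma Amon_even {n : ℕ} (h : Even n) : Amon n = X ^ n := by
  rw [Amon]; simp [h]

lemma Amon_odd {n : ℕ} (h : ¬ Even n) (h3 : 3 ≤ n) :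
    Amon n = ∑ k ∈ (Finset.range n).attach, ((qpoly n).coeff k.val) • Amon k.val := by
  rw [Amon]; simp [h, Nat.not_lt.2 h3, qpoly]

lemma Amon_one : Amon 1 = 0 := by
  rw [Amon]; norm_num

lemma Amon_coeff_odd : ∀ m, ∀ j, Odd j → (Amon m).coeff j = 0 := by
  intro m
  induction m using Nat.strong_induction_on with
  | _ m IH =>
    intro j hj
    by_cases he : Even m
    · rw [Amon_even he, coeff_X_pow, if_neg]
      rintro rfl
      exact (Nat.not_odd_iff_even.mpr he) hj
    · by_cases h3 : 3 ≤ m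
      · rw [Amon_odd he h3, finset_sum_coeff]
        refine Finset.sum_eq_zero fun k _ => ?_
        rw [coeff_smul, IH k.val (Finset.mem_range.mp k.property) j hj, smul_zero]
      · interval_cases m <;> simp_all [Amon_one]

lemma Amon_coeff_high : ∀ m, ¬ Even m → ∀ j, m ≤ j → (Amon m).coeff j = 0 := by
  intro m
  induction m using Nat.strong_induction_on with
  | _ m IH =>
    intro he j hj
    by_cases h3 : 3 ≤ m
    · rw [Amon_odd he h3, finset_sum_coeff]
      refine Finset.sum_eq_zero fun k _ => ?_
      have hk : k.val < m := Finset.mem_range.mp k.property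
      by_cases hke : Even k.val
      · rw [Amon_even hke, coeff_smul, coeff_X_pow, if_neg (by omega), smul_zero]
      · rw [coeff_smul, IH k.val hk hke j (by omega), smul_zero]
    · interval_cases m <;> simp_all [Amon_one]

lemma Amon_coeff_zero : ∀ m, 1 ≤ m → (Amon m).coeff 0 = 0 := by
  intro m
  induction m using Nat.strong_induction_on with
  | _ m IH =>
    intro hm
    by_cases he : Even m
    · rw [Amon_even he, coeff_X_pow, if_neg (by omega)]
    · by_cases h3 : 3 ≤ m
      · rw [Amon_odd he h3, finset_sum_coeff]
        refine Finset.sum_eq_zero fun k _ => ?_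
        have hk : k.val < m := Finset.mem_range.mp k.property
        rcases Nat.eq_zero_or_pos k.val with h0 | h1
        · rw [coeff_smul, h0]
          have : (qpoly m).coeff 0 = 0 := by
            rw [coeff_zero_eq_eval_zero]
            simp [qpoly]
          simp [this]
        · rw [coeff_smul, IH k.val hk h1, smul_zero]
      · interval_cases m <;> simp_all [Amon_one]

noncomputable def phi (p : Polynomial ℚ) : ℚ := p.eval 1 - p.coeff 0 + p.coeff 2

lemma phi_smul (c : ℚ) (p : Polynomial ℚ) : phi (c • p) = c * phi p := by
  simp [phi, smul_eval, coeff_smul, smul_eq_mul]; ring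

lemma phi_sum {α : Type*} (s : Finset α) (f : α → Polynomial ℚ) :
    phi (∑ i ∈ s, f i) = ∑ i ∈ s, phi (f i) := by
  simp [phi, eval_finset_sum, finset_sum_coeff, Finset.sum_add_distrib, Finset.sum_sub_distrib]

lemma qpoly_natDegree_lt {m : ℕ} (hm : 3 ≤ m) : (qpoly m).natDegree < m := by
  set d := m - 2 with hd
  have hd1 : 1 ≤ d := by omega
  set r : Polynomial ℚ := X ^ d - (X - 1) ^ d with hr
  have hrd : r.natDegree < d := by
    rcases eq_or_ne r 0 with h | h
    · simp [h]; omega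
    · have h1 : r.natDegree ≤ d := by
        refine le_trans (natDegree_sub_le _ _) ?_
        simp only [natDegree_X_pow]
        have : ((X : Polynomial ℚ) - 1) ^ d = (X - C 1) ^ d := by norm_num
        rw [this, natDegree_pow, natDegree_X_sub_C]
        omega
      have hcoef : r.coeff d = 0 := by
        have h2 : ((X : Polynomial ℚ) - 1) ^ d = (X - C 1) ^ d := by norm_num
        have hmon : (((X : Polynomial ℚ) - 1) ^ d).coeff d = 1 := by
          rw [h2]
          have hnd : ((X - C (1:ℚ)) ^ d).natDegree = d := by
            rw [natDegree_pow, natDegree_X_sub_C]; omega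
          have hm2 := ((monic_X_sub_C (1 : ℚ)).pow d).coeff_natDegree
          rwa [hnd] at hm2
        rw [hr, coeff_sub, coeff_X_pow, if_pos rfl, hmon, sub_self]
      refine lt_of_le_of_ne h1 fun heq => h ?_
      have : r.leadingCoeff = 0 := by rw [leadingCoeff, heq, hcoef]
      exact leadingCoeff_eq_zero.mp this
  calc (qpoly m).natDegree ≤ (C (1/2 : ℚ) * X ^ 2).natDegree + r.natDegree :=
        natDegree_mul_le
    _ < m := by
        have : (C (1/2 : ℚ) * X ^ 2).natDegree ≤ 2 := by
          refine le_trans natDegree_mul_le ?_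
          simp
        omega

lemma qpoly_eval_one {m : ℕ} (hm : 3 ≤ m) : (qpoly m).eval 1 = 1/2 := by
  have : m - 2 ≠ 0 := by omega
  simp [qpoly, zero_pow this]

lemma qpoly_coeff_zero (m : ℕ) : (qpoly m).coeff 0 = 0 := by
  rw [coeff_zero_eq_eval_zero]; simp [qpoly]

lemma qpoly_coeff_one (m : ℕ) : (qpoly m).coeff 1 = 0 := by
  have : qpoly m = X * (X * (C (1/2 : ℚ) * (X ^ (m-2) - (X-1)^(m-2)))) := by
    rw [qpoly]; ring
  rw [this, coeff_X_mul, mul_coeff_zero, coeff_X_zero, zero_mul]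

lemma qpoly_coeff_two {m : ℕ} (he : ¬ Even m) (hm : 3 ≤ m) : (qpoly m).coeff 2 = 1/2 := by
  have : qpoly m = X ^ 2 * (C (1/2 : ℚ) * (X ^ (m-2) - (X-1)^(m-2))) := by
    rw [qpoly]; ring
  have h2 : (2 : ℕ) = 0 + 2 := rfl
  rw [this, h2, coeff_X_pow_mul]
  rw [mul_coeff_zero, coeff_C]
  have hd : Odd (m - 2) := Nat.Odd.sub_even (by omega) (Nat.not_even_iff_odd.mp he) (by norm_num)
  have hne : m - 2 ≠ 0 := by omega
  rw [coeff_zero_eq_eval_zero]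
  simp [hd.neg_one_pow, zero_pow hne]

lemma phi_Amon_odd : ∀ m, ¬ Even m → 3 ≤ m → phi (Amon m) = 1 := by
  intro m
  induction m using Nat.strong_induction_on with
  | _ m IH =>
    intro he h3
    rw [Amon_odd he h3, phi_sum]
    simp only [phi_smul]
    rw [Finset.sum_attach (Finset.range m) (fun k => (qpoly m).coeff k * phi (Amon k))]
    have step : ∀ k ∈ Finset.range m, (qpoly m).coeff k * phi (Amon k) =
        (qpoly m).coeff k * (1 + (if k = 2 then 1 else 0) - (if k = 0 then 1 else 0)
          - (if k = 1 then 1 else 0)) := by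
      intro k hk
      have hkm := Finset.mem_range.mp hk
      congr 1
      by_cases hke : Even k
      · rw [Amon_even hke]
        rcases Nat.eq_zero_or_pos k with rfl | h1
        · norm_num [phi, coeff_one]
        · rcases eq_or_ne k 2 with rfl | h2
          · norm_num [phi, coeff_X_pow]
          · have h0 : k ≠ 0 := by omega
            have h1' : k ≠ 1 := by rintro rfl; exact Nat.not_even_one hke
            simp [phi, coeff_X_pow, h0, h1', h2, Ne.symm h0, Ne.symm h2]
      · rcases eq_or_ne k 1 with rfl | h1
        · simp [phi, Amon_one]
        · have hk3 : 3 ≤ k := by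
            rcases Nat.not_even_iff_odd.mp hke with ⟨j, rfl⟩
            omega
          have h0 : k ≠ 0 := by omega
          have h2 : k ≠ 2 := by omega
          rw [IH k hkm hke hk3]
          simp [h0, h1, h2]
    rw [Finset.sum_congr rfl step]
    have expand : ∀ k, (qpoly m).coeff k *
        (1 + (if k = 2 then 1 else 0) - (if k = 0 then 1 else 0) - (if k = 1 then 1 else 0))
        = (qpoly m).coeff k + (if k = 2 then (qpoly m).coeff k else 0)
          - (if k = 0 then (qpoly m).coeff k else 0) - (if k = 1 then (qpoly m).coeff k else 0) := by
      intro k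
      by_cases h2 : k = 2 <;> by_cases h0 : k = 0 <;> by_cases h1 : k = 1 <;>
        simp [h0, h1, h2] <;> ring
    simp only [expand]
    rw [Finset.sum_sub_distrib, Finset.sum_sub_distrib, Finset.sum_add_distrib]
    rw [Finset.sum_ite_eq' (Finset.range m) 2 (fun k => (qpoly m).coeff k),
        Finset.sum_ite_eq' (Finset.range m) 0 (fun k => (qpoly m).coeff k),
        Finset.sum_ite_eq' (Finset.range m) 1 (fun k => (qpoly m).coeff k)]
    rw [if_pos (Finset.mem_range.mpr (by omega)), if_pos (Finset.mem_range.mpr (by omega)),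
        if_pos (Finset.mem_range.mpr (by omega))]
    have hsum : ∑ k ∈ Finset.range m, (qpoly m).coeff k = (qpoly m).eval 1 := by
      rw [eval_eq_sum_range' (qpoly_natDegree_lt h3)]
      simp
    rw [hsum, qpoly_eval_one h3, qpoly_coeff_two he h3, qpoly_coeff_zero, qpoly_coeff_one]
    norm_num

lemma sum_even_coeff (p : Polynomial ℚ) (hodd : ∀ j, Odd j → p.coeff j = 0) :
    ∀ N, ∑ j ∈ Finset.range (2*N+1), p.coeff j = ∑ k ∈ Finset.range (N+1), p.coeff (2*k) := by
  intro N
  induction N with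
  | zero => simp
  | succ N ih =>
    have h1 : 2*(N+1)+1 = (2*N+1)+1+1 := by ring
    rw [h1, Finset.sum_range_succ, Finset.sum_range_succ, ih, Finset.sum_range_succ,
      hodd (2*N+1) ⟨N, by ring⟩, show 2*N+1+1 = 2*(N+1) from by ring]
    rw [Finset.sum_range_succ, Finset.sum_range_succ
      (f := fun k => p.coeff (2 * k)) N]
    ring

/-- `A(t^{2n+1}) = Σ_{k=1}^{n} c_k t^{2k}` satisfies `2c₁ + Σ_{k=2}^{n} c_k = 1`
for every `n ≥ 1`; equivalently, substituting `t² ↦ 2x` and `t^{2k} ↦ x`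
(`k ≥ 2`) into `A(t^{2n+1})` yields `x`. -/
theorem Amon_chromatic_substitution (n : ℕ) (hn : 1 ≤ n) :
    2 * (Amon (2 * n + 1)).coeff 2 +
      ∑ k ∈ Finset.Icc 2 n, (Amon (2 * n + 1)).coeff (2 * k) = 1 := by
  set p := Amon (2 * n + 1) with hp
  have he : ¬ Even (2 * n + 1) := Nat.not_even_iff_odd.mpr ⟨n, by ring⟩
  have h3 : 3 ≤ 2 * n + 1 := by omega
  have hphi := phi_Amon_odd _ he h3
  have hc0 : p.coeff 0 = 0 := Amon_coeff_zero _ (by omega)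
  have hdeg : p.natDegree < 2 * n + 1 := by
    by_contra h
    push_neg at h
    have hz := Amon_coeff_high _ he p.natDegree h
    rcases eq_or_ne p 0 with h0 | h0
    · rw [h0] at h; simp at h
    · exact h0 (leadingCoeff_eq_zero.mp hz)
  have heval : p.eval 1 = ∑ j ∈ Finset.range (2*n+1), p.coeff j := by
    rw [eval_eq_sum_range' hdeg]; simp
  have hsum := sum_even_coeff p (Amon_coeff_odd _) n
  have hins : Finset.range (n+1) = insert 0 (insert 1 (Finset.Icc 2 n)) := by
    ext x; simp [Finset.mem_Icc]; omega
  have key : phi p = 2 * p.coeff 2 + ∑ k ∈ Finset.Icc 2 n, p.coeff (2*k) := by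
    unfold phi
    rw [heval, hsum, hc0, hins, Finset.sum_insert (by simp), Finset.sum_insert (by simp)]
    norm_num [hc0]
    ring
  rw [← key]
  exact hphi
end
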